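/- Let X be the genus 2 curve glued from X₁ = Spec k[t³,t⁴,t⁵] and X₂ = Spec k[s] via t = s⁻¹. The dualizing sheaf ω of X is the O_X-submodule of the sheaf of rational 1-forms generated by dt/t³ and dt/t² on X₁ and by ds on X₂; moreover ω is not reflexive: the double dual (ω^∨)^∨ = Hom(Hom(ω, O_X), O_X) is strictly larger than ω, containing in addition dt/t. -/

import Mathlib

/-!
STATEMENT 18: Let X be the genus 2 curve glued from X₁ = Spec k[t³,t⁴,t⁵] and
X₂ = Spec k[s] via t = s⁻¹.  The dualizing sheaf ω of X is the O_X-submodule of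
the sheaf of rational 1-forms generated by dt/t³, dt/t² on X₁ and by ds on X₂;
moreover ω is not reflexive: the double dual (ω^∨)^∨ is strictly larger than ω,
containing in addition dt/t.

We identify the constant sheaf of rational 1-forms with K = k(t) by η ↦ η/dt,
so ω (computed from the residue characterization, as in the paper) has sections
ω₁ = O₁·⟨t⁻³, t⁻²⟩ over X₁ and ω₂ = O₂·⟨t⁻²⟩ over X₂ (ds = -t⁻²dt).  Duals of
subsheaves of K are computed chartwise by I ↦ {f : f·I ⊆ O}.  The claims:
(1) ω^∨ has sections O₁·⟨t⁶,t⁷,t⁸⟩ over X₁ (i.e. is generated by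
    t⁶∂_t, t⁷∂_t, t⁸∂_t) and O₂·⟨t²⟩ over X₂ (generated by ∂_s = -t²∂_t);
(2) the double dual contains dt/t (i.e. t⁻¹) over X₁, while ω does not:
    ω → (ω^∨)^∨ is not an isomorphism.
-/

open Submodule

variable (k : Type*) [Field k]

noncomputable abbrev w2T : RatFunc k := RatFunc.X

noncomputable def w2O1 : Subalgebra k (RatFunc k) :=
  Algebra.adjoin k {w2T k ^ 3, w2T k ^ 4, w2T k ^ 5}

noncomputable def w2O2 : Subalgebra k (RatFunc k) :=
  Algebra.adjoin k {(w2T k)⁻¹}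

/-- Sections of the dualizing sheaf ω over X₁: generated by dt/t³ and dt/t². -/
noncomputable def w2omega1 : Submodule (w2O1 k) (RatFunc k) :=
  Submodule.span (w2O1 k) {(w2T k ^ 3)⁻¹, (w2T k ^ 2)⁻¹}

/-- Sections of the dualizing sheaf ω over X₂: generated by ds = -dt/t². -/
noncomputable def w2omega2 : Submodule (w2O2 k) (RatFunc k) :=
  Submodule.span (w2O2 k) {-(w2T k ^ 2)⁻¹}

/-- The chartwise dual {f ∈ k(t) : f·I ⊆ S} of a module of sections I over a
chart with coordinate ring S. -/
noncomputable def w2dual (S : Subalgebra k (RatFunc k)) (I : Submodule S (RatFunc k)) :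
    Submodule S (RatFunc k) where
  carrier := {f | ∀ x ∈ I, f * x ∈ S}
  add_mem' := fun {a b} ha hb x hx => by
    simp only [Set.mem_setOf_eq] at *
    simpa [add_mul] using add_mem (ha x hx) (hb x hx)
  zero_mem' := fun x hx => by simpa using S.zero_mem
  smul_mem' := fun c f hf x hx => by
    simpa [Algebra.smul_def, mul_assoc] using mul_mem c.2 (hf x hx)

/-!
`O₁ = k[t³,t⁴,t⁵]` is `k + t³k[t]`, hence `k[t] = O₁ + O₁t + O₁t²`. If `f t⁻³` and `f t⁻²` lie in
`O₁`, then `g = f t⁻³` has `g, gt ∈ O₁`, which kills the constant term of `g`; so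
`ω₁^∨ = t⁶k[t] = O₁⟨t⁶, t⁷, t⁸⟩`. Multiplication by `t⁻¹` maps `t⁶k[t]` into `t⁵k[t] ⊆ O₁`, so
`t⁻¹ ∈ (ω₁^∨)^∨`; but `t⁻¹ = a t⁻³ + b t⁻²` with `a, b ∈ O₁` would give `t² = a + bt`, and neither
`O₁` nor `O₁t` has a `t²` term. On `X₂`, `ω₂` is free of rank one, so its dual is spanned by the
inverse of the generator.
-/

open Polynomial

section

variable {k}

theorem w2dual_eq_one_div (S : Subalgebra k (RatFunc k)) (I : Submodule S (RatFunc k)) :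
    w2dual k S I = 1 / I := by
  ext f
  simp [mem_div_iff_forall_mul_mem, mem_one, w2dual]

theorem mem_w2dual_span_iff {S : Subalgebra k (RatFunc k)} {G : Set (RatFunc k)}
    {f : RatFunc k} : f ∈ w2dual k S (span S G) ↔ ∀ g ∈ G, f * g ∈ S := by
  rw [w2dual_eq_one_div, ← span_singleton_le_iff_mem, Submodule.le_div_iff_mul_le, span_mul_span,
    span_le, Set.singleton_mul, Set.image_subset_iff]
  simp [Set.subset_def, mem_one]

theorem w2dual_span_singleton (S : Subalgebra k (RatFunc k)) {u : RatFunc k} (hu : u ≠ 0) :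
    w2dual k S (span S {u}) = span S {u⁻¹} := by
  ext f
  rw [mem_w2dual_span_iff, mem_span_singleton]
  constructor
  · intro h
    exact ⟨⟨f * u, h u rfl⟩, by simp [Algebra.smul_def, hu]⟩
  · rintro ⟨a, rfl⟩ g rfl
    simp [Algebra.smul_def, hu]

theorem w2T_ne_zero : w2T k ≠ 0 := RatFunc.X_ne_zero

theorem algebraMap_X_eq_w2T : algebraMap k[X] (RatFunc k) X = w2T k := RatFunc.algebraMap_X

theorem w2T_pow_add_three_mem_w2O1 : ∀ n : ℕ, w2T k ^ (n + 3) ∈ w2O1 k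
  | 0 | 1 | 2 => Algebra.subset_adjoin (by simp)
  | n + 3 => by
    rw [pow_add]
    exact mul_mem (w2T_pow_add_three_mem_w2O1 n) (Algebra.subset_adjoin (by simp))

theorem w2T_pow_mul_inv_pow_mem_w2O1 {m n : ℕ} (h : n + 3 ≤ m) :
    w2T k ^ m * (w2T k ^ n)⁻¹ ∈ w2O1 k := by
  obtain ⟨j, rfl⟩ : ∃ j, m = j + 3 + n := ⟨m - n - 3, by omega⟩
  rw [pow_add, mul_inv_cancel_right₀ (pow_ne_zero _ w2T_ne_zero)]
  exact w2T_pow_add_three_mem_w2O1 j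

theorem w2T_inv_mul_pow_mem_w2O1 {m : ℕ} (h : 4 ≤ m) : (w2T k)⁻¹ * w2T k ^ m ∈ w2O1 k := by
  rw [mul_comm]
  simpa only [pow_one] using w2T_pow_mul_inv_pow_mem_w2O1 (k := k) (n := 1) h

theorem exists_C_add_X_pow_three_mul_of_mem_w2O1 {f : RatFunc k} (hf : f ∈ w2O1 k) :
    ∃ (c : k) (p : k[X]), f = algebraMap k[X] (RatFunc k) (C c + X ^ 3 * p) := by
  induction hf using Algebra.adjoin_induction with
  | mem x hx =>
    rcases hx with rfl | rfl | rfl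
    exacts [⟨0, 1, by simp⟩, ⟨0, X, by simp [pow_succ]⟩,
      ⟨0, X ^ 2, by simp [← pow_add]⟩]
  | algebraMap c => exact ⟨c, 0, by simp⟩
  | add x y _ _ hx hy =>
    obtain ⟨c, p, rfl⟩ := hx
    obtain ⟨d, q, rfl⟩ := hy
    exact ⟨c + d, p + q, by rw [← map_add]; congr 1; simp only [C_add]; ring⟩
  | mul x y _ _ hx hy =>
    obtain ⟨c, p, rfl⟩ := hx
    obtain ⟨d, q, rfl⟩ := hy
    exact ⟨c * d, C c * q + C d * p + X ^ 3 * p * q,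
      by rw [← map_mul]; congr 1; simp only [C_mul]; ring⟩

theorem exists_eq_w2T_pow_three_mul_of_mem_w2O1 {g : RatFunc k} (hg : g ∈ w2O1 k)
    (hgT : g * w2T k ∈ w2O1 k) : ∃ p : k[X], g = w2T k ^ 3 * algebraMap k[X] (RatFunc k) p := by
  obtain ⟨c, p, rfl⟩ := exists_C_add_X_pow_three_mul_of_mem_w2O1 hg
  obtain ⟨d, q, hdq⟩ := exists_C_add_X_pow_three_mul_of_mem_w2O1 hgT
  rw [← algebraMap_X_eq_w2T, ← map_mul] at hdq
  have hc : c = 0 := by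
    simpa [coeff_X_pow_mul', coeff_C] using
      congrArg (coeff · 1) (RatFunc.algebraMap_injective k hdq)
  exact ⟨p, by simp [hc]⟩

theorem add_mul_w2T_ne_w2T_sq {a b : RatFunc k} (ha : a ∈ w2O1 k) (hb : b ∈ w2O1 k) :
    a + b * w2T k ≠ w2T k ^ 2 := by
  obtain ⟨c, p, rfl⟩ := exists_C_add_X_pow_three_mul_of_mem_w2O1 ha
  obtain ⟨d, q, rfl⟩ := exists_C_add_X_pow_three_mul_of_mem_w2O1 hb
  intro h
  rw [← algebraMap_X_eq_w2T, ← map_mul, ← map_add, ← map_pow] at h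
  simpa [coeff_X_pow_mul', coeff_C, coeff_X_pow] using
    congrArg (coeff · 2) (RatFunc.algebraMap_injective k h)

theorem w2T_pow_mul_mem_span (m : ℕ) (p : k[X]) :
    w2T k ^ m * algebraMap k[X] (RatFunc k) p ∈
      span (w2O1 k) {w2T k ^ m, w2T k ^ (m + 1), w2T k ^ (m + 2)} := by
  induction p using Polynomial.induction_on' with
  | add p q hp hq => rw [map_add, mul_add]; exact add_mem hp hq
  | monomial n c =>
    have hc : algebraMap k (RatFunc k) c * (w2T k ^ 3) ^ (n / 3) ∈ w2O1 k :=
      mul_mem (algebraMap_mem _ c) (pow_mem (Algebra.subset_adjoin (by simp)) _)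
    have hmono : w2T k ^ m * algebraMap k[X] (RatFunc k) (monomial n c) =
        (⟨_, hc⟩ : w2O1 k) • w2T k ^ (m + n % 3) := by
      rw [← C_mul_X_pow_eq_monomial, Subalgebra.smul_def]
      simp only [map_mul, map_pow, algebraMap_X_eq_w2T, RatFunc.algebraMap_C,
        RatFunc.algebraMap_eq_C]
      conv_lhs => rw [← Nat.div_add_mod n 3]
      ring
    rw [hmono]
    refine smul_mem _ _ (subset_span ?_)
    obtain h | h | h : n % 3 = 0 ∨ n % 3 = 1 ∨ n % 3 = 2 := by omega
    all_goals simp [h]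

theorem w2dual_w2omega1 :
    w2dual k (w2O1 k) (w2omega1 k) = span (w2O1 k) {w2T k ^ 6, w2T k ^ 7, w2T k ^ 8} := by
  apply le_antisymm
  · intro f hf
    rw [w2omega1, mem_w2dual_span_iff] at hf
    have hf3 := hf (w2T k ^ 3)⁻¹ (by simp)
    have hf2 : f * (w2T k ^ 3)⁻¹ * w2T k ∈ w2O1 k := by
      convert hf (w2T k ^ 2)⁻¹ (by simp) using 1
      field_simp
    obtain ⟨p, hp⟩ := exists_eq_w2T_pow_three_mul_of_mem_w2O1 hf3 hf2
    have hfp : f = w2T k ^ 6 * algebraMap k[X] (RatFunc k) p := calc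
      f = f * (w2T k ^ 3)⁻¹ * w2T k ^ 3 :=
          (inv_mul_cancel_right₀ (pow_ne_zero 3 w2T_ne_zero) f).symm
      _ = w2T k ^ 6 * algebraMap k[X] (RatFunc k) p := by rw [hp]; ring
    simpa [hfp] using w2T_pow_mul_mem_span 6 p
  · rw [span_le]
    rintro _ (rfl | rfl | rfl) <;>
      simp only [SetLike.mem_coe, w2omega1, mem_w2dual_span_iff, Set.mem_insert_iff,
        Set.mem_singleton_iff, forall_eq_or_imp, forall_eq] <;>
      exact ⟨w2T_pow_mul_inv_pow_mem_w2O1 (by norm_num),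
        w2T_pow_mul_inv_pow_mem_w2O1 (by norm_num)⟩

theorem w2dual_w2omega2 : w2dual k (w2O2 k) (w2omega2 k) = span (w2O2 k) {w2T k ^ 2} := by
  rw [w2omega2, w2dual_span_singleton _ (by simp [w2T_ne_zero]), inv_neg, inv_inv,
    ← Set.neg_singleton, span_neg]

theorem w2T_inv_mem_w2dual_w2dual_w2omega1 :
    (w2T k)⁻¹ ∈ w2dual k (w2O1 k) (w2dual k (w2O1 k) (w2omega1 k)) := by
  rw [w2dual_w2omega1, mem_w2dual_span_iff]
  rintro _ (rfl | rfl | rfl) <;> exact w2T_inv_mul_pow_mem_w2O1 (by norm_num)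

theorem w2T_inv_notMem_w2omega1 : (w2T k)⁻¹ ∉ w2omega1 k := by
  rw [w2omega1, mem_span_pair]
  rintro ⟨a, b, hab⟩
  apply add_mul_w2T_ne_w2T_sq a.2 b.2
  rw [Subalgebra.smul_def, Subalgebra.smul_def, smul_eq_mul, smul_eq_mul] at hab
  have hT := w2T_ne_zero (k := k)
  field_simp at hab
  linear_combination hab

end

theorem dualizing_sheaf_not_reflexive :
    -- (1) ω^∨ is generated by t⁶∂_t, t⁷∂_t, t⁸∂_t on X₁ and by ∂_s on X₂:
    w2dual k (w2O1 k) (w2omega1 k) =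
      Submodule.span (w2O1 k) {w2T k ^ 6, w2T k ^ 7, w2T k ^ 8} ∧
    w2dual k (w2O2 k) (w2omega2 k) = Submodule.span (w2O2 k) {w2T k ^ 2} ∧
    -- (2) (ω^∨)^∨ contains the section dt/t over X₁, which ω does not:
    (w2T k)⁻¹ ∈ w2dual k (w2O1 k) (w2dual k (w2O1 k) (w2omega1 k)) ∧
    (w2T k)⁻¹ ∉ w2omega1 k ∧
    -- so ω ⊆ (ω^∨)^∨ is strict: ω is not reflexive:
    w2omega1 k ≠ w2dual k (w2O1 k) (w2dual k (w2O1 k) (w2omega1 k)) := by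
  exact ⟨w2dual_w2omega1, w2dual_w2omega2, w2T_inv_mem_w2dual_w2dual_w2omega1,
    w2T_inv_notMem_w2omega1,
    fun h => w2T_inv_notMem_w2omega1 (h.ge w2T_inv_mem_w2dual_w2dual_w2omega1)⟩
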